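/- Let G = V^t ⋊ H with V a faithful irreducible H-module, and let K = W₁X and M = W₂H^{v₂}, where W₁ is a proper H-submodule of V^t, W₂ is a maximal H-submodule of V^t, X ≤ H^{v₁} for some v₁ ∈ V^t, and v₂ ∈ V^t. If W₁ + W₂ = V^t, then there exists w₁ ∈ W₁ such that K ∩ M = (W₁ ∩ W₂)·X^{w₁}. -/

import Mathlib

/-!
Write `v₂ - v₁ = w₁ + w₂` with `wᵢ ∈ Wᵢ`. Conjugating by `w₁ ∈ W₁` leaves `K = W₁X` unchanged
and moves `X` into `H^{v₁+w₁} = (H^{v₂})^{-w₂} ≤ W₂H^{v₂} = M`. Dedekind's modular law then gives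
`K ∩ M = (W₁ ∩ M)X^{w₁}`, and `W₁ ∩ M = W₁ ∩ W₂` because `H^{v₂}` meets `V^t` trivially.
-/

namespace PaperSDP

variable {V H : Type*} [AddCommGroup V] [Group H] [DistribMulAction H V] {t : ℕ}

/-- The diagonal action of `H` on `V^t`, as a homomorphism into the
(multiplicatively written) automorphism group of `V^t`. -/
def phi (V : Type*) [AddCommGroup V] (H : Type*) [Group H] [DistribMulAction H V]
    (t : ℕ) : H →* MulAut (Multiplicative (Fin t → V)) where
  toFun h := AddEquiv.toMultiplicative (DistribMulAction.toAddAut H (Fin t → V) h)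
  map_one' := by ext v; simp
  map_mul' h₁ h₂ := by ext v; simp [mul_smul]

/-- The semidirect product `G = V^t ⋊ H` with diagonal action. -/
abbrev SDP (V : Type*) [AddCommGroup V] (H : Type*) [Group H] [DistribMulAction H V]
    (t : ℕ) : Type _ :=
  (Multiplicative (Fin t → V)) ⋊[phi V H t] H

/-- The copy of `V^t` inside `G`. -/
def VtG (V : Type*) [AddCommGroup V] (H : Type*) [Group H] [DistribMulAction H V]
    (t : ℕ) : Subgroup (SDP V H t) :=
  (SemidirectProduct.inl : Multiplicative (Fin t → V) →* SDP V H t).range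

/-- The image in `G` of an additive subgroup `W` of `V^t`. -/
def subG (W : AddSubgroup (Fin t → V)) : Subgroup (SDP V H t) :=
  (AddSubgroup.toSubgroup W).map
    (SemidirectProduct.inl : Multiplicative (Fin t → V) →* SDP V H t)

/-- The element of `G` corresponding to `v ∈ V^t`. -/
def elemG (v : Fin t → V) : SDP V H t :=
  SemidirectProduct.inl (Multiplicative.ofAdd v)

/-- The conjugate `K^v = v⁻¹ K v` of a subgroup `K ≤ G` by an element `v ∈ V^t`. -/
def conjG (K : Subgroup (SDP V H t)) (v : Fin t → V) : Subgroup (SDP V H t) :=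
  K.map (MulAut.conj (elemG v)⁻¹).toMonoidHom

/-- The copy `H^v` of `H` in `G`, conjugated by `v ∈ V^t`. -/
def HG (V : Type*) [AddCommGroup V] (H : Type*) [Group H] [DistribMulAction H V]
    (t : ℕ) (v : Fin t → V) : Subgroup (SDP V H t) :=
  conjG (SemidirectProduct.inr : H →* SDP V H t).range v

/-- `W` is an `H`-submodule of `V^t` (an `H`-invariant additive subgroup). -/
def IsHSub (H : Type*) [Group H] [DistribMulAction H V]
    (W : AddSubgroup (Fin t → V)) : Prop :=
  ∀ (h : H) (w : Fin t → V), w ∈ W → h • w ∈ W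

/-- `W` is a maximal `H`-submodule of `V^t`. -/
def IsMaxHSub (H : Type*) [Group H] [DistribMulAction H V]
    (W : AddSubgroup (Fin t → V)) : Prop :=
  IsHSub H W ∧ W ≠ ⊤ ∧ ∀ W' : AddSubgroup (Fin t → V), IsHSub H W' → W < W' → W' = ⊤

/-- The action of `H` on `V` is (faithful and) irreducible. -/
def IsIrreducible (H : Type*) [Group H] (V : Type*) [AddCommGroup V]
    [DistribMulAction H V] : Prop :=
  (⊥ : AddSubgroup V) ≠ ⊤ ∧
    ∀ W : AddSubgroup V, (∀ (h : H) (w : V), w ∈ W → h • w ∈ W) → W = ⊥ ∨ W = ⊤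

/-- The action of `H` on `V` is faithful. -/
def IsFaithful (H : Type*) [Group H] (V : Type*) [AddCommGroup V]
    [DistribMulAction H V] : Prop :=
  ∀ h : H, (∀ v : V, h • v = v) → h = 1

/-- An `End_H(V)`-subspace of `V`: an additive subgroup stable under all
`H`-equivariant additive endomorphisms of `V`. -/
def IsFSub (H : Type*) [Group H] (V : Type*) [AddCommGroup V] [DistribMulAction H V]
    (Z : AddSubgroup V) : Prop :=
  ∀ f : V →+ V, (∀ (h : H) (v : V), f (h • v) = h • f v) → ∀ z ∈ Z, f z ∈ Z

/-- The centralizer `C_{H*}(Z)` of a subset `Z ⊆ V` (embedded diagonally in `V^t`)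
in the conjugate `H* = H^g` of `H`, inside `G`. -/
def CHstar (g : SDP V H t) (Z : AddSubgroup V) : Subgroup (SDP V H t) :=
  ((SemidirectProduct.inr : H →* SDP V H t).range.map (MulAut.conj g).toMonoidHom) ⊓
    Subgroup.centralizer ((fun z : V => elemG (H := H) (fun _ : Fin t => z)) '' Z)

end PaperSDP

open PaperSDP

open scoped Pointwise

namespace Subgroup

variable {G : Type*} [Group G]

theorem sup_inf_assoc_of_le_of_coe_sup_eq_mul {A C : Subgroup G} (B : Subgroup G) (hAC : A ≤ C)
    (hAB : ((A ⊔ B : Subgroup G) : Set G) = A * B) : (A ⊔ B) ⊓ C = A ⊔ B ⊓ C := by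
  refine le_antisymm ?_ (sup_le (le_inf le_sup_left hAC) (inf_le_inf_right C le_sup_right))
  intro g hg
  obtain ⟨hg, hgC⟩ := mem_inf.mp hg
  rw [← SetLike.mem_coe, hAB] at hg
  obtain ⟨a, ha, b, hb, rfl⟩ := hg
  have hbC : b ∈ C := by simpa using mul_mem (inv_mem (hAC ha)) hgC
  exact mul_mem_sup ha ⟨hb, hbC⟩

theorem map_conj_le_sup {N : Subgroup G} (Y : Subgroup G) {n : G} (hn : n ∈ N) :
    Y.map (MulAut.conj n).toMonoidHom ≤ N ⊔ Y := by
  rintro _ ⟨y, hy, rfl⟩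
  exact mul_mem (mul_mem (mem_sup_left hn) (mem_sup_right hy)) (inv_mem (mem_sup_left hn))

theorem sup_map_conj_eq {N : Subgroup G} (Y : Subgroup G) {n : G} (hn : n ∈ N) :
    N ⊔ Y.map (MulAut.conj n).toMonoidHom = N ⊔ Y := by
  refine le_antisymm (sup_le le_sup_left (map_conj_le_sup Y hn)) (sup_le le_sup_left ?_)
  intro y hy
  have hconj : n * y * n⁻¹ ∈ N ⊔ Y.map (MulAut.conj n).toMonoidHom :=
    mem_sup_right ⟨y, hy, rfl⟩
  simpa [mul_assoc] using
    mul_mem (mul_mem (mem_sup_left (inv_mem hn)) hconj) (mem_sup_left hn)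

end Subgroup

namespace PaperSDP

open SemidirectProduct

variable {V H : Type*} [AddCommGroup V] [Group H] [DistribMulAction H V] {t : ℕ}

theorem elemG_add (u v : Fin t → V) : elemG (H := H) (u + v) = elemG u * elemG v :=
  map_mul _ _ _

theorem elemG_mem_subG {W : AddSubgroup (Fin t → V)} {w : Fin t → V} (hw : w ∈ W) :
    elemG (H := H) w ∈ subG W :=
  ⟨Multiplicative.ofAdd w, hw, rfl⟩

theorem conj_elemG (g : SDP V H t) (w : Fin t → V) :
    g * elemG w * g⁻¹ = elemG (g.right • w) := by
  calc g * elemG w * g⁻¹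
      = inl g.left * (inr g.right * elemG w * (inr g.right)⁻¹) * (inl g.left)⁻¹ := by
        conv_lhs => rw [← inl_left_mul_inr_right g]
        group
    _ = inl g.left * elemG (g.right • w) * (inl g.left)⁻¹ := by
        rw [← map_inv, elemG, ← inl_aut]
        rfl
    _ = elemG (g.right • w) := by
        rw [elemG, ← map_inv, ← map_mul, ← map_mul, mul_inv_cancel_comm]

theorem subG_normal {W : AddSubgroup (Fin t → V)} (hW : IsHSub H W) : (subG (H := H) W).Normal where
  conj_mem := by
    rintro _ ⟨w, hw, rfl⟩ g
    exact conj_elemG g w ▸ elemG_mem_subG (hW g.right w hw)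

theorem subG_le_VtG (W : AddSubgroup (Fin t → V)) : subG (H := H) W ≤ VtG V H t :=
  Subgroup.map_le_range _ _

theorem subG_inf_subG (W₁ W₂ : AddSubgroup (Fin t → V)) :
    subG (H := H) W₁ ⊓ subG W₂ = subG (W₁ ⊓ W₂) := by
  rw [subG, subG, subG, ← Subgroup.map_inf_eq _ _ _ inl_injective]
  rfl

theorem conjG_mono {K K' : Subgroup (SDP V H t)} (h : K ≤ K') (v : Fin t → V) :
    conjG K v ≤ conjG K' v :=
  Subgroup.map_mono h

theorem conjG_conjG (K : Subgroup (SDP V H t)) (u v : Fin t → V) :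
    conjG (conjG K u) v = conjG K (u + v) := by
  rw [conjG, conjG, conjG, Subgroup.map_map, elemG_add, mul_inv_rev, map_mul]
  rfl

theorem HG_inf_VtG (v : Fin t → V) : HG V H t v ⊓ VtG V H t = ⊥ := by
  rw [eq_bot_iff]
  intro x hx
  obtain ⟨⟨_, ⟨h, rfl⟩, rfl⟩, hxV⟩ := Subgroup.mem_inf.mp hx
  rw [VtG, range_inl_eq_ker_rightHom, MonoidHom.mem_ker] at hxV
  have hh : h = 1 := by simpa [elemG] using hxV
  simp [hh]

theorem sup_HG_inf_VtG {W : AddSubgroup (Fin t → V)} (hW : IsHSub H W) (v : Fin t → V) :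
    (subG W ⊔ HG V H t v) ⊓ VtG V H t = subG W := by
  have := subG_normal hW
  rw [Subgroup.sup_inf_assoc_of_le_of_coe_sup_eq_mul _ (subG_le_VtG W) (Subgroup.normal_mul _ _),
    HG_inf_VtG, sup_bot_eq]

theorem subG_inf_sup_HG (W₁ : AddSubgroup (Fin t → V)) {W₂ : AddSubgroup (Fin t → V)}
    (hW₂ : IsHSub H W₂) (v : Fin t → V) :
    subG W₁ ⊓ (subG W₂ ⊔ HG V H t v) = subG (W₁ ⊓ W₂) := by
  rw [← inf_eq_left.mpr (subG_le_VtG W₁), inf_assoc, inf_comm (VtG V H t), sup_HG_inf_VtG hW₂,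
    subG_inf_subG]

theorem conjG_le_subG_sup {W : AddSubgroup (Fin t → V)} {w : Fin t → V} (hw : w ∈ W)
    (K : Subgroup (SDP V H t)) : conjG K w ≤ subG W ⊔ K :=
  Subgroup.map_conj_le_sup K (inv_mem (elemG_mem_subG hw))

theorem subG_sup_conjG {W : AddSubgroup (Fin t → V)} {w : Fin t → V} (hw : w ∈ W)
    (K : Subgroup (SDP V H t)) : subG W ⊔ conjG K w = subG W ⊔ K :=
  Subgroup.sup_map_conj_eq K (inv_mem (elemG_mem_subG hw))

end PaperSDP

theorem inter_eq_of_sup_eq_top_general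
    (V H : Type*) [AddCommGroup V] [Group H]
    [DistribMulAction H V]
    (t : ℕ) (W₁ W₂ : AddSubgroup (Fin t → V)) (v₁ v₂ : Fin t → V)
    (X : Subgroup (SDP V H t))
    (hW₁ : IsHSub H W₁) (hW₂ : IsMaxHSub H W₂)
    (hX : X ≤ HG V H t v₁)
    (hsup : W₁ ⊔ W₂ = ⊤) :
    ∃ w₁ ∈ W₁,
      (subG W₁ ⊔ X) ⊓ (subG W₂ ⊔ HG V H t v₂) = subG (W₁ ⊓ W₂) ⊔ conjG X w₁ := by
  obtain ⟨w₁, hw₁, w₂, hw₂, hsum⟩ := AddSubgroup.mem_sup.mp (hsup ▸ AddSubgroup.mem_top (v₂ - v₁))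
  refine ⟨w₁, hw₁, ?_⟩
  have : (subG (H := H) W₁).Normal := subG_normal hW₁
  have hXM : conjG X w₁ ≤ subG W₂ ⊔ HG V H t v₂ :=
    calc conjG X w₁ ≤ conjG (HG V H t v₁) w₁ := conjG_mono hX w₁
      _ = conjG (HG V H t v₂) (-w₂) := by
        rw [HG, HG, conjG_conjG, conjG_conjG,
          eq_add_neg_of_add_eq (by rw [add_assoc, hsum, add_sub_cancel] : v₁ + w₁ + w₂ = v₂)]
      _ ≤ subG W₂ ⊔ HG V H t v₂ := conjG_le_subG_sup (neg_mem hw₂) _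
  calc (subG W₁ ⊔ X) ⊓ (subG W₂ ⊔ HG V H t v₂)
      = (conjG X w₁ ⊔ subG W₁) ⊓ (subG W₂ ⊔ HG V H t v₂) := by
        rw [← subG_sup_conjG hw₁, sup_comm]
    _ = conjG X w₁ ⊔ subG W₁ ⊓ (subG W₂ ⊔ HG V H t v₂) :=
        Subgroup.sup_inf_assoc_of_le_of_coe_sup_eq_mul _ hXM (Subgroup.mul_normal _ _)
    _ = subG (W₁ ⊓ W₂) ⊔ conjG X w₁ := by
        rw [subG_inf_sup_HG W₁ hW₂.1, sup_comm]

/-- Let `G = V^t ⋊ H` with `V` a faithful irreducible `H`-module, and let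
`K = W₁X` and `M = W₂H^{v₂}`, where `W₁` is a proper `H`-submodule of `V^t`,
`W₂` is a maximal `H`-submodule of `V^t`, `X ≤ H^{v₁}`, and `v₁, v₂ ∈ V^t`.
If `W₁ + W₂ = V^t`, then there exists `w₁ ∈ W₁` such that
`K ∩ M = (W₁ ∩ W₂)·X^{w₁}`. -/
theorem inter_eq_of_sup_eq_top
    (p : ℕ) (hp : p.Prime) (V H : Type*) [AddCommGroup V] [Group H]
    [DistribMulAction H V] [Finite V] [Finite H] [Group.IsSolvable H]
    (helem : ∀ v : V, p • v = 0)
    (hfaith : IsFaithful H V) (hirr : IsIrreducible H V)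
    (t : ℕ) (W₁ W₂ : AddSubgroup (Fin t → V)) (v₁ v₂ : Fin t → V)
    (X : Subgroup (SDP V H t))
    (hW₁ : IsHSub H W₁) (hW₁top : W₁ ≠ ⊤) (hW₂ : IsMaxHSub H W₂)
    (hX : X ≤ HG V H t v₁)
    (hsup : W₁ ⊔ W₂ = ⊤) :
    ∃ w₁ ∈ W₁,
      (subG W₁ ⊔ X) ⊓ (subG W₂ ⊔ HG V H t v₂) = subG (W₁ ⊓ W₂) ⊔ conjG X w₁ :=
  inter_eq_of_sup_eq_top_general V H t W₁ W₂ v₁ v₂ X hW₁ hW₂ hX hsup
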